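/- arXiv:math/0509449 — 9 statements merged into one kernel-verified Lean document; each statement's English description precedes it below -/
import Mathlib

section
/- Let G be a group that is ICC. Then every subgroup H of G of finite index is itself ICC. -/
/-- A group is ICC ("à classes de conjugaison infinies") if it is infinite and
the conjugacy class of every element `g ≠ 1` is infinite. -/
def IsICC (G : Type*) [Group G] : Prop :=
  Infinite G ∧ ∀ g : G, g ≠ 1 → (conjugatesOf g).Infinite

/-!
The conjugacy class of `g` has the size of `G ⧸ C_G(g)`, and for `x ∈ H` the centralizer of `x`
in `H` is `C_G(x) ∩ H`. So if `x` has finitely many conjugates in `H`, then `C_G(x) ∩ H` has finite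
index in `H`, hence in `G`, and `x` has finitely many conjugates in `G`.
-/

open Subgroup MulAction

section

variable {G : Type*} [Group G]

theorem orbit_conjAct_eq_conjugatesOf (g : G) : orbit (ConjAct G) g = conjugatesOf g := by
  ext h
  rw [ConjAct.mem_orbit_conjAct]
  exact isConj_comm

theorem ncard_conjugatesOf (g : G) : (conjugatesOf g).ncard = (centralizer {g}).index := by
  rw [centralizer_eq_comap_stabilizer, ← orbit_conjAct_eq_conjugatesOf, ← index_stabilizer]
  exact (index_comap_of_surjective _ ConjAct.toConjAct.surjective).symm

theorem finite_conjugatesOf_iff_index_centralizer_ne_zero (g : G) :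
    (conjugatesOf g).Finite ↔ (centralizer {g}).index ≠ 0 := by
  rw [← ncard_conjugatesOf]
  exact ⟨fun h => ((Set.ncard_pos h).2 ⟨g, mem_conjugatesOf_self⟩).ne',
    Set.finite_of_ncard_ne_zero⟩

theorem Subgroup.centralizer_singleton_eq_subgroupOf (H : Subgroup G) (x : H) :
    centralizer {x} = (centralizer {(x : G)}).subgroupOf H := by
  ext y
  simp [mem_centralizer_singleton_iff, mem_subgroupOf, Subtype.ext_iff]

theorem Subgroup.finite_conjugatesOf_coe_of_finite (H : Subgroup G) [H.FiniteIndex] {x : H}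
    (hx : (conjugatesOf x).Finite) : (conjugatesOf (x : G)).Finite := by
  rw [finite_conjugatesOf_iff_index_centralizer_ne_zero] at hx ⊢
  rw [centralizer_singleton_eq_subgroupOf, ← relIndex] at hx
  rw [← relIndex_top_right]
  exact relIndex_ne_zero_trans hx (H.relIndex_top_right ▸ FiniteIndex.index_ne_zero)

theorem Subgroup.infinite_of_finiteIndex [Infinite G] (H : Subgroup G) [H.FiniteIndex] :
    Infinite H := by
  refine not_finite_iff_infinite.mp fun hfin => ?_
  exact not_finite_iff_infinite.mpr ‹Infinite G›
    ((finite_iff_finite_and_finiteIndex H).2 ⟨hfin, inferInstance⟩)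

end

/-- In an ICC group, every subgroup of finite index is itself ICC. -/
theorem subgroup_of_finiteIndex_isICC {G : Type*} [Group G] (hG : IsICC G)
    (H : Subgroup G) (hH : H.index ≠ 0) : IsICC H := by
  have : H.FiniteIndex := ⟨hH⟩
  have : Infinite G := hG.1
  refine ⟨H.infinite_of_finiteIndex, fun x hx hfin => ?_⟩
  exact hG.2 x (by exact_mod_cast hx) (H.finite_conjugatesOf_coe_of_finite hfin)
end

section
/- Let G be a torsion-free group (every element other than the identity has infinite order) possessing a subgroup H of finite index that is ICC. Then G is itself ICC. -/
/-- A monoid is torsion-free if every element other than `1` has infinite order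
(the definition `Monoid.IsTorsionFree` of the older Mathlib, since removed). -/
def Monoid.IsTorsionFree (G : Type*) [Monoid G] : Prop :=
  ∀ g : G, g ≠ 1 → ¬IsOfFinOrder g

/-!
Some positive power `g ^ n` of any `g : G` lies in `H`, and `g ^ n ≠ 1` when `g ≠ 1` since `G` is
torsion-free. The conjugacy class of `g ^ n` in `G` is the image of that of `g` under `x ↦ x ^ n`
and contains the conjugacy class of `g ^ n` in `H`, which is infinite; so the class of `g` is
infinite as well.
-/

theorem MonoidHom.image_conjugatesOf_subset {α β : Type*} [Monoid α] [Monoid β] (f : α →* β)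
    (a : α) : f '' conjugatesOf a ⊆ conjugatesOf (f a) := by
  rintro _ ⟨b, hb, rfl⟩
  exact f.map_isConj hb

theorem Monoid.IsTorsionFree.pow_ne_one {M : Type*} [Monoid M] (htf : Monoid.IsTorsionFree M)
    {g : M} (hg : g ≠ 1) {n : ℕ} (hn : 0 < n) : g ^ n ≠ 1 :=
  fun h => htf g hg (isOfFinOrder_iff_pow_eq_one.mpr ⟨n, hn, h⟩)

section Group

variable {G : Type*} [Group G]

theorem conjugatesOf_pow_subset_image (g : G) (n : ℕ) :
    conjugatesOf (g ^ n) ⊆ (· ^ n) '' conjugatesOf g := by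
  intro x hx
  obtain ⟨u, rfl⟩ := isConj_iff.mp hx
  exact ⟨u * g * u⁻¹, isConj_iff.mpr ⟨u, rfl⟩, conj_pow⟩

theorem Set.Finite.conjugatesOf_pow {g : G} (h : (conjugatesOf g).Finite) (n : ℕ) :
    (conjugatesOf (g ^ n)).Finite :=
  (h.image _).subset (conjugatesOf_pow_subset_image g n)

theorem Set.Infinite.conjugatesOf_subtype {H : Subgroup G} {h : H}
    (hh : (conjugatesOf h).Infinite) : (conjugatesOf (h : G)).Infinite :=
  (hh.image H.subtype_injective.injOn).mono (H.subtype.image_conjugatesOf_subset h)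

end Group

/-- A torsion-free group possessing an ICC subgroup of finite index is itself ICC. -/
theorem isICC_of_torsionFree_of_finiteIndex_isICC {G : Type*} [Group G]
    (htf : Monoid.IsTorsionFree G) (H : Subgroup G) (hidx : H.index ≠ 0)
    (hH : IsICC H) : IsICC G := by
  obtain ⟨_, hHicc⟩ := hH
  refine ⟨Infinite.of_injective _ H.subtype_injective, fun g hg hfin => ?_⟩
  obtain ⟨n, hn, -, hgnH⟩ := H.exists_pow_mem_of_index_ne_zero hidx g
  have hgn : (⟨g ^ n, hgnH⟩ : H) ≠ 1 :=
    fun h => htf.pow_ne_one hg hn (congrArg Subtype.val h)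
  exact (hHicc _ hgn).conjugatesOf_subtype (hfin.conjugatesOf_pow n)
end

section
/- Let G be a group and H a subgroup of G of index 2; assume H is ICC. Then either G is ICC, or there exists an element f ∈ G with f ≠ 1, f² = 1, f central in G and f ∉ H, so that G is the internal direct product of H and the order-2 subgroup generated by f (in particular G is isomorphic to H × ℤ/2ℤ). -/
/-!
Elements with finite conjugacy class form a normal subgroup of `G`, the FC-center. Since `H` is
ICC, the FC-center meets `H` trivially. If `G` is not ICC, pick `g ≠ 1` in the FC-center; then
`g ∉ H`, every commutator `⁅h, g⁆` with `h ∈ H` lies in `H` and in the FC-center, so `g`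
centralizes `H`, hence all of `G = H ∪ gH`; and `g ^ 2 ∈ H` forces `g ^ 2 = 1`. Then
`(h, t) ↦ h * g ^ t` is an isomorphism `H × ℤ/2ℤ ≃* G`.
-/

namespace Subgroup

variable {G : Type*} [Group G]

variable (G) in
def fcCenter : Subgroup G where
  carrier := {g | (conjugatesOf g).Finite}
  one_mem' := (Set.finite_singleton 1).subset fun _ h => isConj_one_right.mp h
  mul_mem' {a b} ha hb := by
    refine (ha.mul hb).subset ?_
    intro x hx
    obtain ⟨c, rfl⟩ := isConj_iff.mp hx
    exact ⟨c * a * c⁻¹, isConj_iff.mpr ⟨c, rfl⟩, c * b * c⁻¹, isConj_iff.mpr ⟨c, rfl⟩, by group⟩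
  inv_mem' {a} ha := by
    refine ha.inv.subset ?_
    intro x hx
    obtain ⟨c, rfl⟩ := isConj_iff.mp hx
    exact isConj_iff.mpr ⟨c, by rw [conj_inv, inv_inv]⟩

theorem mem_fcCenter {g : G} : g ∈ fcCenter G ↔ (conjugatesOf g).Finite := Iff.rfl

instance fcCenter_normal : (fcCenter G).Normal where
  conj_mem g hg c := by
    rw [mem_fcCenter, ← (isConj_iff.mpr ⟨c, rfl⟩ : IsConj g (c * g * c⁻¹)).conjugatesOf_eq]
    exact hg

theorem mem_center_of_index_two {H : Subgroup G} (hidx : H.index = 2) {g : G} (hgH : g ∉ H)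
    (hcomm : ∀ h ∈ H, Commute h g) : g ∈ center G := by
  refine mem_center_iff.mpr fun x => ?_
  by_cases hx : x ∈ H
  · exact hcomm x hx
  · have hxg : x * g⁻¹ ∈ H := by simp [mul_mem_iff_of_index_two hidx, hx, hgH]
    simpa using ((hcomm _ hxg).mul_left (Commute.refl g)).eq

end Subgroup

open Subgroup

theorem isICC_iff_fcCenter_eq_bot {G : Type*} [Group G] :
    IsICC G ↔ Infinite G ∧ fcCenter G = ⊥ := by
  simp only [IsICC, eq_bot_iff_forall, mem_fcCenter]
  refine and_congr_right fun _ => forall_congr' fun g => ?_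
  rw [← not_imp_not, Set.not_infinite, not_not]

namespace IsICC

variable {G : Type*} [Group G] {H : Subgroup G}

theorem eq_one_of_mem_fcCenter (hH : IsICC H) {x : G} (hxH : x ∈ H) (hx : x ∈ fcCenter G) :
    x = 1 := by
  by_contra hx1
  refine hH.2 ⟨x, hxH⟩ (by simpa using hx1) ?_
  exact (hx.preimage H.subtype_injective.injOn).subset fun _ hy => H.subtype.map_isConj hy

theorem commute_of_mem_fcCenter [H.Normal] (hH : IsICC H) {h g : G} (hh : h ∈ H)
    (hg : g ∈ fcCenter G) : Commute h g := by
  refine commutatorElement_eq_one_iff_commute.mp (hH.eq_one_of_mem_fcCenter ?_ ?_)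
  · exact commutator_le_left H ⊤ (commutator_mem_commutator hh (mem_top g))
  · exact commutator_le_right ⊤ _ (commutator_mem_commutator (mem_top h) hg)

end IsICC

section Involution

variable {G : Type*} [Group G] {f : G}

theorem Multiplicative.zmod_two_cases (t : Multiplicative (ZMod 2)) : t = 1 ∨ t = .ofAdd 1 := by
  revert t
  decide

def involutionHom (hf : f ^ 2 = 1) : Multiplicative (ZMod 2) →* G :=
  AddMonoidHom.toMultiplicativeLeft <|
    ZMod.lift 2 ⟨zmultiplesHom _ (Additive.ofMul f), by
      simp only [zmultiplesHom_apply, natCast_zsmul, ← ofMul_pow, hf, ofMul_one]⟩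

theorem involutionHom_ofAdd_one (hf : f ^ 2 = 1) : involutionHom hf (.ofAdd 1) = f := by
  simp only [involutionHom, AddMonoidHom.toMultiplicativeLeft_apply_apply, toAdd_ofAdd]
  rw [← Int.cast_one, ZMod.lift_coe]
  simp

def prodInvolutionHom (H : Subgroup G) (hf : f ^ 2 = 1) (hcomm : ∀ h ∈ H, Commute h f) :
    H × Multiplicative (ZMod 2) →* G :=
  H.subtype.noncommCoprod (involutionHom hf) fun (h : H) (t : Multiplicative (ZMod 2)) => by
    rcases Multiplicative.zmod_two_cases t with rfl | rfl
    · simp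
    · simpa [involutionHom_ofAdd_one] using hcomm h h.2

theorem prodInvolutionHom_apply (H : Subgroup G) (hf : f ^ 2 = 1)
    (hcomm : ∀ h ∈ H, Commute h f) (h : H) (t : Multiplicative (ZMod 2)) :
    prodInvolutionHom H hf hcomm (h, t) = h * involutionHom hf t := rfl

theorem bijective_prodInvolutionHom {H : Subgroup G} (hidx : H.index = 2) (hfH : f ∉ H)
    (hf : f ^ 2 = 1) (hcomm : ∀ h ∈ H, Commute h f) :
    Function.Bijective (prodInvolutionHom H hf hcomm) := by
  constructor
  · refine (injective_iff_map_eq_one _).mpr fun ⟨h, t⟩ hht => ?_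
    rcases Multiplicative.zmod_two_cases t with rfl | rfl
    · simpa [prodInvolutionHom_apply] using hht
    · rw [prodInvolutionHom_apply, involutionHom_ofAdd_one, mul_eq_one_iff_eq_inv'] at hht
      exact absurd (hht ▸ inv_mem h.2) hfH
  · intro x
    by_cases hx : x ∈ H
    · exact ⟨(⟨x, hx⟩, 1), by simp [prodInvolutionHom_apply]⟩
    · have hxf : x * f ∈ H := by simp [mul_mem_iff_of_index_two hidx, hx, hfH]
      refine ⟨(⟨x * f, hxf⟩, .ofAdd 1), ?_⟩
      simp [prodInvolutionHom_apply, involutionHom_ofAdd_one, mul_assoc, ← sq, hf]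

end Involution

/-- If `H` is a subgroup of index `2` of a group `G` and `H` is ICC, then either `G` is
ICC, or there is a central element `f ≠ 1` of order two with `f ∉ H`, so that `G` is the
internal direct product of `H` and the order-2 subgroup generated by `f`; in particular
`G` is isomorphic to `H × ℤ/2ℤ`. -/
theorem isICC_or_directProduct_of_index_two {G : Type*} [Group G]
    (H : Subgroup G) (hidx : H.index = 2) (hH : IsICC H) :
    IsICC G ∨
      ∃ f : G, f ≠ 1 ∧ f ^ 2 = 1 ∧ f ∈ Subgroup.center G ∧ f ∉ H ∧
        Nonempty (G ≃* H × Multiplicative (ZMod 2)) := by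
  by_cases hG : IsICC G
  · exact Or.inl hG
  have : Infinite H := hH.1
  have : Infinite G := Infinite.of_injective _ H.subtype_injective
  have : H.Normal := normal_of_index_eq_two hidx
  obtain ⟨g, hgfc, hg1⟩ : ∃ g ∈ fcCenter G, g ≠ 1 := by
    by_contra! h
    exact hG (isICC_iff_fcCenter_eq_bot.mpr ⟨inferInstance, (eq_bot_iff_forall _).mpr h⟩)
  have hgH : g ∉ H := fun hgH => hg1 (hH.eq_one_of_mem_fcCenter hgH hgfc)
  have hcomm : ∀ h ∈ H, Commute h g := fun _ hh => hH.commute_of_mem_fcCenter hh hgfc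
  have hg2 : g ^ 2 = 1 :=
    hH.eq_one_of_mem_fcCenter (sq_mem_of_index_two hidx g) (pow_mem hgfc 2)
  refine Or.inr ⟨g, hg1, hg2, mem_center_of_index_two hidx hgH hcomm, hgH, ⟨?_⟩⟩
  exact (MulEquiv.ofBijective _ (bijective_prodInvolutionHom hidx hgH hg2 hcomm)).symm
end

section
/- Let G be a group and H a subgroup of finite index in G whose center is infinite. Then H contains a subgroup N such that N is normal in G, N has finite index in G, and the center of N is infinite. -/
/-!
The normal core `N` of `H` is normal and of finite index in `G`, hence of finite index in `H`.
Then `Z(H) ∩ N` has finite index in the infinite group `Z(H)`, so it is infinite, and it lies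
in `Z(N)`.
-/

namespace Subgroup

variable {G : Type*} [Group G]

theorem infinite_of_finiteIndex_s3 [Infinite G] (K : Subgroup G) [K.FiniteIndex] : Infinite K :=
  not_finite_iff_infinite.mp fun hK =>
    have := (finite_iff_finite_and_finiteIndex K).mpr ⟨hK, ‹K.FiniteIndex›⟩
    not_finite G

theorem infinite_center_of_finiteIndex [Infinite (center G)] (K : Subgroup G) [K.FiniteIndex] :
    Infinite (center K) := by
  have : Infinite (K.subgroupOf (center G)) := infinite_of_finiteIndex_s3 _
  refine Infinite.of_injective (fun z : K.subgroupOf (center G) =>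
    ⟨⟨z.1, z.2⟩, mem_center_iff.2 fun k => Subtype.ext (z.1.2.comm k).symm⟩)
    fun z w hzw => ?_
  exact Subtype.ext (Subtype.ext (congrArg (fun x : center K => ((x : K) : G)) hzw))

end Subgroup

/-- If `H` is a subgroup of finite index of a group `G` whose center is infinite, then `H`
contains a subgroup `N` which is normal in `G`, of finite index in `G`, and whose center
is infinite. -/
theorem exists_normal_finiteIndex_infinite_center {G : Type*} [Group G]
    (H : Subgroup G) (hidx : H.index ≠ 0) (hZ : Infinite (Subgroup.center H)) :
    ∃ N : Subgroup G, N ≤ H ∧ N.Normal ∧ N.index ≠ 0 ∧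
      Infinite (Subgroup.center N) := by
  have : H.FiniteIndex := ⟨hidx⟩
  refine ⟨H.normalCore, H.normalCore_le, H.normalCore_normal,
    Subgroup.FiniteIndex.index_ne_zero, ?_⟩
  have := Subgroup.infinite_center_of_finiteIndex (H.normalCore.subgroupOf H)
  exact (Subgroup.centerCongr (Subgroup.subgroupOfEquivOfLe H.normalCore_le)).infinite_iff.mp this
end

section
/- Let G be a group containing an element g of infinite order whose centralizer Z_G(g) has finite index in G. Then G contains a subgroup K that is abelian, finitely generated, infinite, and normal in G. -/
/-!
Let `N` be the normal core of `Z_G(g)`; it has finite index, so `x = g ^ [G : N]` lies in `N`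
and still has infinite order. Take `K` to be the normal closure of `x`. Since `N ≤ Z_G(x)` is
normal, `x` centralizes `N`, hence so does the normal subgroup `K`; as also `K ≤ N`, `K` is
abelian. It is generated by the conjugacy class of `x`, which is finite because `Z_G(x) ⊇ N`
has finite index.
-/

open Subgroup MulAction

namespace Group

variable {G : Type*} [Group G]

theorem finite_conjugatesOf_of_finiteIndex_centralizer {x : G}
    [hx : (centralizer {x}).FiniteIndex] : (conjugatesOf x).Finite := by
  have hindex : (centralizer {x}).index = (stabilizer (ConjAct G) x).index := by
    rw [centralizer_eq_comap_stabilizer]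
    exact index_comap_of_surjective _ ConjAct.toConjAct.surjective
  rw [index_stabilizer, ConjAct.orbit_eq_carrier_conjClasses] at hindex
  exact Set.finite_of_ncard_ne_zero (hindex ▸ hx.index_ne_zero)

theorem normalClosure_singleton_fg_of_finiteIndex_centralizer {x : G}
    [(centralizer {x}).FiniteIndex] : (normalClosure {x}).FG := by
  refine (Subgroup.fg_iff _).2
    ⟨conjugatesOf x, ?_, finite_conjugatesOf_of_finiteIndex_centralizer⟩
  rw [normalClosure, conjugatesOfSet, Set.biUnion_singleton]

end Group

namespace Subgroup

variable {G : Type*} [Group G]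

theorem centralizer_singleton_le_centralizer_pow (g : G) (n : ℕ) :
    centralizer {g} ≤ centralizer {g ^ n} := fun _ hc ↦
  mem_centralizer_singleton_iff.2 (Commute.pow_right (mem_centralizer_singleton_iff.1 hc) n)

theorem normalClosure_singleton_le_centralizer {N : Subgroup G} [N.Normal] {x : G}
    (hN : N ≤ centralizer {x}) : normalClosure {x} ≤ centralizer N :=
  normalClosure_le_normal <| Set.singleton_subset_iff.2 fun _ hn ↦
    mem_centralizer_singleton_iff.1 (hN hn)

theorem normalClosure_singleton_mul_comm {N : Subgroup G} [N.Normal] {x : G} (hx : x ∈ N)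
    (hN : N ≤ centralizer {x}) (a b : normalClosure {x}) : a * b = b * a := by
  have hle : normalClosure {x} ≤ N := normalClosure_le_normal (Set.singleton_subset_iff.2 hx)
  exact Subtype.ext <|
    mem_centralizer_iff.1 (normalClosure_singleton_le_centralizer hN b.2) a (hle a.2)

theorem infinite_of_mem_of_not_isOfFinOrder {H : Subgroup G} {x : G} (hx : x ∈ H)
    (hfin : ¬IsOfFinOrder x) : Infinite H :=
  ((infinite_zpowers.2 hfin).mono (zpowers_le.2 hx)).to_subtype

end Subgroup

/-- If a group `G` contains an element `g` of infinite order whose centralizer has finite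
index in `G`, then `G` contains a subgroup `K` which is abelian, finitely generated,
infinite, and normal in `G`. -/
theorem exists_abelian_fg_infinite_normal_subgroup {G : Type*} [Group G]
    (g : G) (hg : ¬ IsOfFinOrder g)
    (hidx : (Subgroup.centralizer {g}).index ≠ 0) :
    ∃ K : Subgroup G, (∀ a b : K, a * b = b * a) ∧ K.FG ∧ Infinite K ∧ K.Normal := by
  have : (centralizer {g}).FiniteIndex := ⟨hidx⟩
  set N := (centralizer {g}).normalCore
  have hNx : N ≤ centralizer {g ^ N.index} :=
    (normalCore_le _).trans (centralizer_singleton_le_centralizer_pow g _)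
  have : (centralizer {g ^ N.index}).FiniteIndex := finiteIndex_of_le hNx
  have hx : ¬IsOfFinOrder (g ^ N.index) := fun h ↦ hg (h.of_pow FiniteIndex.index_ne_zero)
  exact ⟨normalClosure {g ^ N.index}, normalClosure_singleton_mul_comm (pow_index_mem N g) hNx,
    Group.normalClosure_singleton_fg_of_finiteIndex_centralizer,
    infinite_of_mem_of_not_isOfFinOrder (subset_normalClosure rfl) hx, normalClosure_normal⟩
end

section
/- Let Γ₁ and Γ₂ be groups with |Γ₁| ≥ 3 and |Γ₂| ≥ 2 (Γ₁ has at least three elements and Γ₂ has at least two elements). Then the free product Γ = Γ₁ ∗ Γ₂ is ICC. -/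
/-!
Write a nontrivial element of `Γ₁ ∗ Γ₂` as a reduced word. If its first and last letters lie in
the same factor, conjugating by the powers of `x = u v`, with `u` a nontrivial letter of that
factor and `v` one of the other, produces reduced words `u v ⋯ u v w v⁻¹ u⁻¹ ⋯ v⁻¹ u⁻¹` of
strictly increasing length, hence infinitely many conjugates. Otherwise one end of the word lies
in `Γ₁`, and since `Γ₁` has a third element, conjugating by a suitable letter `c` of `Γ₁` (neither
`1` nor cancelling that end letter) yields a reduced word with both ends in `Γ₁`.
-/

open Cardinal

theorem IsConj.inv {G : Type*} [Group G] {a b : G} (h : IsConj a b) : IsConj a⁻¹ b⁻¹ := by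
  obtain ⟨c, rfl⟩ := isConj_iff.1 h
  exact isConj_iff.2 ⟨c, by group⟩

theorem IsICC.of_mulEquiv {G H : Type*} [Group G] [Group H] (e : G ≃* H) (hG : IsICC G) :
    IsICC H := by
  refine ⟨@Infinite.of_injective _ _ hG.1 e e.injective, fun h hh => ?_⟩
  have hinf := (hG.2 (e.symm h) (by simpa using hh)).image e.injective.injOn
  refine hinf.mono ?_
  rintro _ ⟨x, hx, rfl⟩
  have := e.toMonoidHom.map_isConj hx
  rwa [MulEquiv.coe_toMonoidHom, MulEquiv.apply_symm_apply] at this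

namespace Monoid.CoprodI.NeWord

section Monoid

variable {ι : Type*} {M : ι → Type*} [∀ i, Monoid (M i)] {i j k l : ι}

theorem head_ne_one (w : NeWord M i j) : w.head ≠ 1 := by
  induction w with
  | singleton _ hx => exact hx
  | append _ _ _ ih _ => exact ih

theorem length_toList_eq_of_prod_eq {w₁ : NeWord M i j} {w₂ : NeWord M k l}
    (h : w₁.prod = w₂.prod) : w₁.toList.length = w₂.toList.length := by
  classical
  exact congrArg (fun w => w.toList.length) (Word.equiv.symm.injective h)

theorem exists_prod_eq {g : CoprodI M} (hg : g ≠ 1) : ∃ i j, ∃ w : NeWord M i j, w.prod = g := by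
  classical
  obtain ⟨i, j, w, hw⟩ := of_word (Word.equiv g) fun h => hg <| by
    rw [← Word.equiv.symm_apply_apply g, h]
    exact Word.prod_empty
  exact ⟨i, j, w, by rw [NeWord.prod, hw]; exact Word.equiv.symm_apply_apply g⟩

end Monoid

variable {ι : Type*} {G : ι → Type*} [∀ i, Group (G i)] {i j : ι}

theorem exists_conj_by_of_mul_of (w : NeWord G i i) (hij : i ≠ j) {u : G i} (hu : u ≠ 1)
    {v : G j} (hv : v ≠ 1) :
    ∃ w' : NeWord G i i, w'.prod = (of u * of v) * w.prod * (of u * of v)⁻¹ ∧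
      w'.toList.length = w.toList.length + 4 := by
  let p := (singleton u hu).append hij (singleton v hv)
  refine ⟨(p.append hij.symm w).append hij p.inv, by simp [p, mul_assoc], ?_⟩
  simp [p, inv]

theorem exists_conj_by_pow_of_mul_of (w : NeWord G i i) (hij : i ≠ j) {u : G i} (hu : u ≠ 1)
    {v : G j} (hv : v ≠ 1) (n : ℕ) :
    ∃ w' : NeWord G i i, w'.prod = (of u * of v) ^ n * w.prod * ((of u * of v) ^ n)⁻¹ ∧
      w'.toList.length = w.toList.length + 4 * n := by
  set x : CoprodI G := of u * of v
  induction n with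
  | zero => exact ⟨w, by simp, rfl⟩
  | succ n ih =>
    obtain ⟨w', hprod, hlen⟩ := ih
    obtain ⟨w'', hprod', hlen'⟩ := exists_conj_by_of_mul_of w' hij hu hv
    refine ⟨w'', ?_, by omega⟩
    rw [hprod', hprod, pow_succ', mul_inv_rev x]
    simp only [x, mul_assoc]

theorem infinite_conjugatesOf_prod (w : NeWord G i i) (hij : i ≠ j) {v : G j} (hv : v ≠ 1) :
    (conjugatesOf w.prod).Infinite := by
  set x : CoprodI G := of w.head * of v
  choose W hprod hlen using exists_conj_by_pow_of_mul_of w hij w.head_ne_one hv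
  refine Set.infinite_of_injective_forall_mem (f := fun n => x ^ n * w.prod * (x ^ n)⁻¹)
    (fun n m hnm => ?_) (fun n => isConj_iff.2 ⟨x ^ n, rfl⟩)
  have := length_toList_eq_of_prod_eq ((hprod n).trans (hnm.trans (hprod m).symm))
  rw [hlen, hlen] at this
  omega

theorem exists_isConj_of_three_le_left (w : NeWord G i j) (hij : i ≠ j) (h : 3 ≤ #(G i)) :
    ∃ w' : NeWord G i i, IsConj w.prod w'.prod := by
  obtain ⟨c, hc, hcw⟩ := exists_ne_ne_of_three_le h 1 w.head⁻¹
  have hcw' : c * w.head ≠ 1 := fun h => hcw (eq_inv_of_mul_eq_one_left h)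
  exact ⟨(w.mulHead c hcw').append hij.symm (singleton c⁻¹ (inv_ne_one.2 hc)),
    isConj_iff.2 ⟨of c, by simp⟩⟩

theorem exists_isConj_of_three_le_right (w : NeWord G i j) (hij : i ≠ j) (h : 3 ≤ #(G j)) :
    ∃ w' : NeWord G j j, IsConj w.prod w'.prod := by
  obtain ⟨w', hw'⟩ := w.inv.exists_isConj_of_three_le_left hij.symm h
  exact ⟨w'.inv, by simpa using hw'.inv⟩

end Monoid.CoprodI.NeWord

namespace Monoid.CoprodI

theorem infinite_conjugatesOf_of_three_le {G : Bool → Type*} [∀ b, Group (G b)]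
    (h₁ : 3 ≤ #(G true)) [Nontrivial (G false)] {g : CoprodI G} (hg : g ≠ 1) :
    (conjugatesOf g).Infinite := by
  obtain ⟨i, j, w, rfl⟩ := NeWord.exists_prod_eq hg
  obtain ⟨k, w', hconj⟩ : ∃ k, ∃ w' : NeWord G k k, IsConj w.prod w'.prod :=
    match i, j, w with
    | true, true, w | false, false, w => ⟨_, w, IsConj.refl _⟩
    | true, false, w => ⟨_, w.exists_isConj_of_three_le_left (by decide) h₁⟩
    | false, true, w => ⟨_, w.exists_isConj_of_three_le_right (by decide) h₁⟩
  obtain ⟨v, hv⟩ : ∃ v : G (!k), v ≠ 1 :=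
    match k with
    | true => exists_ne (1 : G false)
    | false => (exists_ne_ne_of_three_le h₁ 1 1).imp fun _ hv => hv.1
  rw [hconj.conjugatesOf_eq]
  exact w'.infinite_conjugatesOf_prod (Bool.not_ne_self k).symm hv

theorem isICC_of_three_le {G : Bool → Type*} [∀ b, Group (G b)]
    (h₁ : 3 ≤ #(G true)) [Nontrivial (G false)] : IsICC (CoprodI G) := by
  obtain ⟨a, ha⟩ := exists_ne (1 : G false)
  have hof : of a ≠ 1 := by rwa [Ne, ← map_one of, (of_injective false).eq_iff]
  exact ⟨Set.infinite_univ_iff.1 ((infinite_conjugatesOf_of_three_le h₁ hof).mono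
    (Set.subset_univ _)), fun _ => infinite_conjugatesOf_of_three_le h₁⟩

end Monoid.CoprodI

namespace Monoid.Coprod

universe u v

variable {Γ₁ : Type u} {Γ₂ : Type v} [Group Γ₁] [Group Γ₂]

variable (Γ₁ Γ₂) in
/-- The factors lifted to a common universe, making `Γ₁ ∗ Γ₂` an indexed free product over
`Bool`. -/
abbrev liftedFactors : Bool → Type (max u v) := fun b => cond b (ULift.{v} Γ₁) (ULift.{u} Γ₂)

instance : ∀ b, Group (liftedFactors Γ₁ Γ₂ b)
  | true => inferInstanceAs (Group (ULift Γ₁))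
  | false => inferInstanceAs (Group (ULift Γ₂))

def mulEquivCoprodI : Coprod Γ₁ Γ₂ ≃* CoprodI (liftedFactors Γ₁ Γ₂) :=
  MonoidHom.toMulEquiv
    (lift ((CoprodI.of (i := true)).comp MulEquiv.ulift.symm.toMonoidHom)
      ((CoprodI.of (i := false)).comp MulEquiv.ulift.symm.toMonoidHom))
    (CoprodI.lift fun
      | true => inl.comp MulEquiv.ulift.toMonoidHom
      | false => inr.comp MulEquiv.ulift.toMonoidHom)
    (by apply hom_ext <;> ext x <;> simp)
    (by apply CoprodI.ext_hom; rintro (_ | _) <;> ext x <;> simp)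

end Monoid.Coprod

/-- The free product `Γ₁ ∗ Γ₂` of a group with at least three elements and a group with
at least two elements is ICC. -/
theorem isICC_coprod {Γ₁ Γ₂ : Type*} [Group Γ₁] [Group Γ₂]
    (h₁ : 3 ≤ Cardinal.mk Γ₁) (h₂ : 2 ≤ Cardinal.mk Γ₂) :
    IsICC (Monoid.Coprod Γ₁ Γ₂) := by
  have : Nontrivial Γ₂ := Cardinal.one_lt_iff_nontrivial.1 (Cardinal.one_lt_two.trans_le h₂)
  have : Nontrivial (Monoid.Coprod.liftedFactors Γ₁ Γ₂ false) :=
    inferInstanceAs (Nontrivial (ULift Γ₂))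
  exact .of_mulEquiv Monoid.Coprod.mulEquivCoprodI.symm
    (Monoid.CoprodI.isICC_of_three_le (by simpa using h₁))
end

section
/- Let Γ₁ be a group, let Γ₀ and Γ₀′ be two subgroups of Γ₁ at least one of which is a proper subgroup of Γ₁, let φ : Γ₀ → Γ₀′ be an isomorphism, and let Γ be the corresponding HNN extension of Γ₁ over φ. If Γ₁ is ICC, then Γ is ICC. -/
theorem Set.Infinite.conjugatesOf_map {G H : Type*} [Group G] [Group H] {f : G →* H}
    (hf : Function.Injective f) {g : G} (hg : (conjugatesOf g).Infinite) :
    (conjugatesOf (f g)).Infinite :=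
  (hg.image hf.injOn).mono <| by
    rintro _ ⟨y, hy, rfl⟩
    exact f.map_isConj hy

namespace HNNExtension

variable {G : Type*} [Group G] {A B : Subgroup G}

theorem toSubgroup_ne_top_or_neg (hproper : A ≠ ⊤ ∨ B ≠ ⊤) (u : ℤˣ) :
    toSubgroup A B u ≠ ⊤ ∨ toSubgroup A B (-u) ≠ ⊤ := by
  rcases Int.units_eq_one_or u with rfl | rfl <;>
    simpa [toSubgroup_one, toSubgroup_neg_one, or_comm] using hproper

namespace NormalWord.ReducedWord

variable (φ : A ≃* B)

theorem exists_prod_eq (g : HNNExtension G A B φ) : ∃ w : ReducedWord G A B, w.prod φ = g := by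
  obtain ⟨d⟩ := TransversalPair.nonempty G A B
  exact ⟨(equiv φ d g).toReducedWord, (equiv φ d).symm_apply_apply g⟩

variable {φ}

/-- The word `t ^ u * w * t ^ (-u)`, read letter by letter, is reduced. -/
def IsReducedConjT (w : ReducedWord G A B) (u : ℤˣ) : Prop :=
  ((u, w.head) :: (w.toList ++ [(-u, 1)])).IsChain
    (fun a b => a.2 ∈ toSubgroup A B a.1 → a.1 = b.1)

def conjT (w : ReducedWord G A B) (u : ℤˣ) (hw : w.IsReducedConjT u) : ReducedWord G A B where
  head := 1
  toList := (u, w.head) :: (w.toList ++ [(-u, 1)])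
  chain := hw

variable {w : ReducedWord G A B} {u : ℤˣ}

theorem prod_conjT (hw : w.IsReducedConjT u) :
    (w.conjT u hw).prod φ = t ^ (u : ℤ) * w.prod φ * (t ^ (u : ℤ))⁻¹ := by
  simp [conjT, ReducedWord.prod, mul_assoc]

theorem isReducedConjT_of
    (hhead : w.head ∈ toSubgroup A B u → (w.toList.map Prod.fst).head? = some u)
    (hlast : ∀ p ∈ w.toList.getLast?, p.2 ∈ toSubgroup A B p.1 → p.1 = -u) :
    w.IsReducedConjT u := by
  refine List.IsChain.cons (w.chain.append (List.isChain_singleton _) ?_) ?_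
  · rintro p hp _ ⟨⟩
    exact hlast p hp
  · intro p hp hmem
    have := hhead hmem
    cases hl : w.toList <;> simp_all

theorem isReducedConjT_conjT (hw : w.IsReducedConjT u) : (w.conjT u hw).IsReducedConjT u :=
  isReducedConjT_of (by simp [conjT]) <| by
    simp only [conjT, ← List.cons_append, List.getLast?_concat]
    simp

theorem exists_isConj_prod_length_eq (hw : w.IsReducedConjT u) (k : ℕ) :
    ∃ w' : ReducedWord G A B, w'.IsReducedConjT u ∧ IsConj (w.prod φ) (w'.prod φ) ∧
      w'.toList.length = w.toList.length + 2 * k := by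
  induction k with
  | zero => exact ⟨w, hw, IsConj.refl _, rfl⟩
  | succ k ih =>
    obtain ⟨w', hw', hconj, hlen⟩ := ih
    refine ⟨w'.conjT u hw', isReducedConjT_conjT hw', hconj.trans ?_, ?_⟩
    · exact isConj_iff.2 ⟨_, (prod_conjT hw').symm⟩
    · simp [conjT, hlen]
      omega

theorem conjugatesOf_prod_infinite (hw : w.IsReducedConjT u) :
    (conjugatesOf (w.prod φ)).Infinite := by
  choose w' _ hconj hlen using exists_isConj_prod_length_eq (φ := φ) hw
  refine Set.infinite_of_injective_forall_mem (f := fun k => (w' k).prod φ) ?_ hconj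
  intro k l hkl
  have := congrArg List.length (HNNExtension.ReducedWord.map_fst_eq_and_of_prod_eq φ hkl).1
  simp only [List.length_map, hlen] at this
  omega

theorem exists_prod_eq_of_mul_prod_mul_inv {l : List (ℤˣ × G)} {e : ℤˣ} {x : G}
    (hw : w.toList = l ++ [(e, x)]) (r : G) :
    ∃ w' : ReducedWord G A B, w'.prod φ = of r * w.prod φ * (of r)⁻¹ ∧
      w'.head = r * w.head ∧ w'.toList = l ++ [(e, x * r⁻¹)] := by
  have hchain := w.chain
  rw [hw, List.isChain_append] at hchain
  refine ⟨⟨r * w.head, l ++ [(e, x * r⁻¹)], hchain.1.append (List.isChain_singleton _) ?_⟩,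
    ?_, rfl, rfl⟩
  · rintro p hp _ ⟨⟩
    exact hchain.2.2 p hp (e, x) rfl
  · simp [ReducedWord.prod, hw, mul_assoc]

/-- `hhead` and `hlast` say that `t^v r w r⁻¹ t^(-v)`, read letter by letter, is reduced. -/
theorem conjugatesOf_prod_infinite_of_reduced_conj {l : List (ℤˣ × G)} {e e₁ : ℤˣ} {x : G}
    (hw : w.toList = l ++ [(e, x)]) (he₁ : (w.toList.map Prod.fst).head? = some e₁)
    (r : G) (v : ℤˣ) (hhead : r * w.head ∈ toSubgroup A B v → v = e₁)
    (hlast : x * r⁻¹ ∈ toSubgroup A B e → e = -v) : (conjugatesOf (w.prod φ)).Infinite := by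
  obtain ⟨w', hprod, hhead', hlist'⟩ := exists_prod_eq_of_mul_prod_mul_inv (φ := φ) hw r
  have hsigns : w'.toList.map Prod.fst = w.toList.map Prod.fst := by simp [hw, hlist']
  rw [isConj_iff_conjugatesOf_eq.1 (isConj_iff.2 ⟨of r, hprod.symm⟩)]
  refine conjugatesOf_prod_infinite (u := v) (isReducedConjT_of ?_ ?_)
  · rw [hsigns, he₁, hhead']
    intro h
    rw [hhead h]
  · simpa [hlist'] using hlast

theorem conjugatesOf_prod_infinite_of_toList_ne_nil (hproper : A ≠ ⊤ ∨ B ≠ ⊤)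
    (hne : w.toList ≠ []) : (conjugatesOf (w.prod φ)).Infinite := by
  obtain ⟨l, ⟨e, x⟩, hw⟩ := w.toList.eq_nil_or_concat'.resolve_left hne
  obtain ⟨e₁, he₁⟩ : ∃ e₁, (w.toList.map Prod.fst).head? = some e₁ :=
    Option.isSome_iff_exists.1 (by simpa using hne)
  obtain rfl | hopp := eq_or_ne e e₁
  · -- The word starts and ends with `t ^ e`: conjugating by a base element, put an element
    -- outside `toSubgroup A B e` at its end, or one outside `toSubgroup A B (-e)` at its front.
    rcases toSubgroup_ne_top_or_neg hproper e with hS | hS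
    · obtain ⟨y, hy⟩ := SetLike.exists_not_mem_of_ne_top _ hS
      exact conjugatesOf_prod_infinite_of_reduced_conj hw he₁ (y⁻¹ * x) e (fun _ => rfl)
        (fun hmem => absurd (by simpa using hmem) hy)
    · obtain ⟨y, hy⟩ := SetLike.exists_not_mem_of_ne_top _ hS
      exact conjugatesOf_prod_infinite_of_reduced_conj hw he₁ (y * w.head⁻¹) (-e)
        (fun hmem => absurd (by simpa using hmem) hy) (fun _ => (neg_neg e).symm)
  · exact conjugatesOf_prod_infinite_of_reduced_conj hw he₁ 1 e₁ (fun _ => rfl)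
      (fun _ => Int.units_ne_iff_eq_neg.1 hopp)

end NormalWord.ReducedWord

end HNNExtension

open HNNExtension NormalWord in
/-- Let `Γ₀` and `Γ₀'` be subgroups of a group `Γ₁`, at least one of which is proper,
let `φ : Γ₀ ≃* Γ₀'` be an isomorphism and let `Γ` be the corresponding HNN extension.
If `Γ₁` is ICC, then `Γ` is ICC. -/
theorem isICC_HNNExtension_of_isICC_base {Γ₁ : Type*} [Group Γ₁]
    (Γ₀ Γ₀' : Subgroup Γ₁) (hproper : Γ₀ ≠ ⊤ ∨ Γ₀' ≠ ⊤) (φ : Γ₀ ≃* Γ₀')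
    (h : IsICC Γ₁) :
    IsICC (HNNExtension Γ₁ Γ₀ Γ₀' φ) := by
  obtain ⟨hinf, hconj⟩ := h
  refine ⟨Infinite.of_injective _ (of_injective φ), fun g hg => ?_⟩
  obtain ⟨w, rfl⟩ := ReducedWord.exists_prod_eq φ g
  rcases eq_or_ne w.toList [] with hnil | hne
  · have hw : w.prod φ = of w.head := by simp [ReducedWord.prod, hnil]
    rw [hw] at hg ⊢
    exact (hconj _ fun h1 => hg (by rw [h1, map_one])).conjugatesOf_map (of_injective φ)
  · exact ReducedWord.conjugatesOf_prod_infinite_of_toList_ne_nil hproper hne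
end

section
/- A group Γ is ICC if and only if it is strongly ICC, i.e. if and only if Γ is infinite and for every finite subset F of Γ with 1 ∉ F there exists a sequence (γ_j)_{j ≥ 1} of elements of Γ such that, for every x ∈ F, the conjugates γ_j⁻¹ x γ_j (j = 1, 2, 3, …) are pairwise distinct. -/
/-- A group is strongly ICC if it is infinite and for every finite subset `F` of
`Γ \ {1}` there is a sequence `(γ_j)` in `Γ` such that for every `x ∈ F` the conjugates
`γ_j⁻¹ * x * γ_j` are pairwise distinct. -/
def IsStronglyICC (Γ : Type*) [Group Γ] : Prop :=
  Infinite Γ ∧ ∀ F : Finset Γ, (1 : Γ) ∉ F →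
    ∃ γ : ℕ → Γ, ∀ x ∈ F, Function.Injective (fun j : ℕ => (γ j)⁻¹ * x * γ j)

/-!
For `x` with infinite conjugacy class and any `c`, the set `{γ | γ⁻¹ x γ = c}` is empty or a
coset of the centralizer of `x`, which has infinite index. By B. H. Neumann's lemma finitely many
such cosets never cover the group, so for any finite `F` and any finite set of earlier choices
there is a `γ` whose conjugates of every `x ∈ F` differ from all earlier ones; choosing such `γ`
one after another gives the sequence. Conversely, a single injective sequence of conjugates of
`g` makes its conjugacy class infinite.
-/

open Pointwise MulAction

theorem MulAction.exists_forall_smul_ne_of_orbit_infinite {G X : Type*} [Group G]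
    [MulAction G X] (F Y : Finset X) (hF : ∀ x ∈ F, (orbit G x).Infinite) :
    ∃ g : G, ∀ x ∈ F, ∀ y ∈ Y, g • x ≠ y := by
  classical
  by_contra! hcover
  let ι := {p : X × X // p.2 ∈ orbit G p.1}
  let g₀ : ι → G := fun p => (mem_orbit_iff.mp p.2).choose
  have hcovers :
      ⋃ p ∈ (F ×ˢ Y).subtype _, g₀ p • (stabilizer G p.1.1 : Set G) = Set.univ := by
    refine Set.eq_univ_of_forall fun g => ?_
    obtain ⟨x, hx, y, hy, rfl⟩ := hcover g
    let p : ι := ⟨(x, g • x), mem_orbit x g⟩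
    refine Set.mem_biUnion (x := p)
      (Finset.mem_subtype.mpr (Finset.mem_product.mpr ⟨hx, hy⟩)) ?_
    have hg₀ : g₀ p • x = g • x := (mem_orbit_iff.mp p.2).choose_spec
    rw [mem_leftCoset_iff, SetLike.mem_coe, mem_stabilizer_iff, mul_smul, ← hg₀, inv_smul_smul]
  obtain ⟨p, hp, hfin⟩ := Subgroup.exists_finiteIndex_of_leftCoset_cover hcovers
  refine hF p.1.1 (Finset.mem_product.mp (Finset.mem_subtype.mp hp)).1 ?_
  exact Set.finite_of_ncard_ne_zero (index_stabilizer G p.1.1 ▸ hfin.index_ne_zero)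

section Conjugation

variable {G : Type*} [Group G]

theorem ConjAct.orbit_eq_conjugatesOf (x : G) :
    orbit (ConjAct G) x = conjugatesOf x := by
  ext y
  exact mem_orbit_conjAct.trans isConj_comm

theorem exists_conj_ne_of_conjugatesOf_infinite (F S : Finset G)
    (hF : ∀ x ∈ F, (conjugatesOf x).Infinite) :
    ∃ γ : G, ∀ x ∈ F, ∀ c ∈ S, γ⁻¹ * x * γ ≠ c⁻¹ * x * c := by
  classical
  obtain ⟨g, hg⟩ := exists_forall_smul_ne_of_orbit_infinite (G := ConjAct G) F
    ((F ×ˢ S).image fun p => p.2⁻¹ * p.1 * p.2)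
    (fun x hx => ConjAct.orbit_eq_conjugatesOf x ▸ hF x hx)
  refine ⟨(ConjAct.ofConjAct g)⁻¹, fun x hx c hc => ?_⟩
  simpa [ConjAct.smul_def] using hg x hx _
    (Finset.mem_image.mpr ⟨(x, c), Finset.mem_product.mpr ⟨hx, hc⟩, rfl⟩)

theorem exists_seq_conj_injective (F : Finset G)
    (hF : ∀ x ∈ F, (conjugatesOf x).Infinite) :
    ∃ γ : ℕ → G, ∀ x ∈ F, Function.Injective fun j => (γ j)⁻¹ * x * γ j := by
  let r : G → G → Prop := fun a b => ∀ x ∈ F, a⁻¹ * x * a ≠ b⁻¹ * x * b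
  have : Std.Symm r := ⟨fun _ _ h x hx => (h x hx).symm⟩
  obtain ⟨γ, -, hγ⟩ := exists_seq_of_forall_finset_exists' (fun _ => True) r fun S _ =>
    (exists_conj_ne_of_conjugatesOf_infinite F S hF).imp fun γ hγ =>
      ⟨trivial, fun c hc x hx => (hγ x hx c hc).symm⟩
  exact ⟨γ, fun x hx => Function.injective_iff_pairwise_ne.mpr fun i j hij => hγ hij x hx⟩

theorem conjugatesOf_infinite_of_injective {x : G} {γ : ℕ → G}
    (h : Function.Injective fun j => (γ j)⁻¹ * x * γ j) : (conjugatesOf x).Infinite :=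
  Set.infinite_of_injective_forall_mem h fun j => isConj_iff.mpr ⟨(γ j)⁻¹, by group⟩

end Conjugation

/-- A group is ICC if and only if it is strongly ICC. -/
theorem isICC_iff_isStronglyICC (Γ : Type*) [Group Γ] :
    IsICC Γ ↔ IsStronglyICC Γ := by
  refine and_congr_right fun _ => ⟨fun hICC F hF => ?_, fun hSICC g hg => ?_⟩
  · exact exists_seq_conj_injective F fun x hx => hICC x (ne_of_mem_of_not_mem hx hF)
  · obtain ⟨γ, hγ⟩ := hSICC {g} (Finset.notMem_singleton.mpr hg.symm)
    exact conjugatesOf_infinite_of_injective (hγ g (Finset.mem_singleton_self g))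
end

section
/- Let φ be an automorphism of the group ℤ² such that for every nonzero integer n and every nonzero v ∈ ℤ² one has φⁿ(v) ≠ v (this holds exactly when the corresponding matrix in GL(2,ℤ) is hyperbolic, i.e. has no eigenvalue that is a root of unity). Then the semidirect product ℤ² ⋊_φ ℤ, in which the generator of ℤ acts on ℤ² by φ, is ICC. -/
/-!
Write `g = (v, m)` in `N ⋊[φ] H`. If `m = 1`, conjugating by `h ∈ H` gives `(φ h v, 1)`, and these
are pairwise distinct because `H` acts freely on `N \ {1}`. If `m ≠ 1`, conjugating by `x ∈ N`
gives `(v · x / φ m x, m)`; since `N` is abelian, two such conjugates coincide only when `x / y`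
is fixed by `φ m`, i.e. when `x = y`.
-/

theorem AddEquiv.toMultiplicative_zpow_apply {G : Type*} [AddGroup G] (A : AddAut G) (n : ℤ)
    (v : G) :
    (AddEquiv.toMultiplicative A ^ n) (Multiplicative.ofAdd v) =
      Multiplicative.ofAdd ((n • A) v) :=
  congrArg (fun B : Multiplicative (AddAut G) ↦ Multiplicative.ofAdd (B.toAdd v))
    (map_zpow (MulAutMultiplicative G) (AddEquiv.toMultiplicative A) n)

namespace SemidirectProduct

section Group

variable {N H : Type*} [Group N] [Group H] {φ : H →* MulAut N}

theorem infinite_conjugatesOf_inl [Infinite H]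
    (hφ : ∀ h : H, h ≠ 1 → ∀ x : N, x ≠ 1 → φ h x ≠ x) {n : N} (hn : n ≠ 1) :
    (conjugatesOf (inl n : N ⋊[φ] H)).Infinite := by
  refine Set.infinite_of_injective_forall_mem (f := fun h : H ↦ (inl (φ h n) : N ⋊[φ] H))
    (fun h k hhk ↦ ?_) fun h ↦ ?_
  · have hfix : φ (k⁻¹ * h) n = n := by
      rw [map_mul, MulAut.mul_apply, inl_injective hhk, ← MulAut.mul_apply, ← map_mul,
        inv_mul_cancel, map_one, MulAut.one_apply]
    by_contra hne
    exact hφ _ (inv_mul_eq_one.not.mpr (Ne.symm hne)) n hn hfix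
  · rw [inl_aut]
    exact isConj_iff.mpr ⟨inr h, by rw [map_inv]⟩

theorem inl_mul_mul_inv_inl_left (x : N) (g : N ⋊[φ] H) :
    (inl x * g * (inl x)⁻¹).left = x * g.left * (φ g.right x)⁻¹ := by
  simp [mul_left, inv_left]

end Group

section CommGroup

variable {N H : Type*} [CommGroup N] [Group H] {φ : H →* MulAut N}

theorem infinite_conjugatesOf_of_right_ne_one [Infinite N]
    (hφ : ∀ h : H, h ≠ 1 → ∀ x : N, x ≠ 1 → φ h x ≠ x) {g : N ⋊[φ] H} (hg : g.right ≠ 1) :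
    (conjugatesOf g).Infinite := by
  refine Set.infinite_of_injective_forall_mem (f := fun x : N ↦ inl x * g * (inl x)⁻¹)
    (fun x y hxy ↦ ?_) fun x ↦ isConj_iff.mpr ⟨inl x, rfl⟩
  have hleft : x / φ g.right x = y / φ g.right y := by
    have := congrArg left hxy
    simp only [inl_mul_mul_inv_inl_left, mul_right_comm _ g.left] at this
    simpa only [div_eq_mul_inv] using mul_right_cancel this
  have hfix : φ g.right (x / y) = x / y := by
    rw [map_div, eq_comm, ← div_eq_div_iff_div_eq_div, hleft]
  by_contra hne
  exact hφ _ hg _ (div_ne_one.mpr hne) hfix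

theorem isICC [Infinite N] [Infinite H]
    (hφ : ∀ h : H, h ≠ 1 → ∀ x : N, x ≠ 1 → φ h x ≠ x) : IsICC (N ⋊[φ] H) := by
  refine ⟨.of_injective _ inr_injective, fun g hg ↦ ?_⟩
  by_cases hright : g.right = 1
  · rw [← inl_left_mul_inr_right g, hright, map_one, mul_one] at hg ⊢
    exact infinite_conjugatesOf_inl hφ (fun h ↦ hg (by rw [h, map_one]))
  · exact infinite_conjugatesOf_of_right_ne_one hφ hright

end CommGroup

end SemidirectProduct

/-- Let `φ` be an automorphism of `ℤ²` such that `φⁿ(v) ≠ v` for every nonzero integer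
`n` and every nonzero `v ∈ ℤ²` (the "hyperbolic" case).  Then the semidirect product
`ℤ² ⋊_φ ℤ`, in which the generator of `ℤ` acts by `φ`, is ICC. -/
theorem isICC_semidirectProduct_of_hyperbolic (A : AddAut (ℤ × ℤ))
    (hA : ∀ n : ℤ, n ≠ 0 → ∀ v : ℤ × ℤ, v ≠ 0 → (n • A) v ≠ v) :
    IsICC (Multiplicative (ℤ × ℤ) ⋊[zpowersHom (MulAut (Multiplicative (ℤ × ℤ)))
      (AddEquiv.toMultiplicative A)] Multiplicative ℤ) := by
  refine SemidirectProduct.isICC fun n hn v hv ↦ ?_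
  rw [zpowersHom_apply, ← ofAdd_toAdd v, AddEquiv.toMultiplicative_zpow_apply]
  exact fun h ↦ hA n.toAdd hn v.toAdd hv (Multiplicative.ofAdd.injective h)
end
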